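/- arXiv:2507.10279 — 2 statements merged into one kernel-verified Lean document; each statement's English description precedes it below -/
import Mathlib

section
/- Fundamental Theorem of Affine Geometry, field case: let F be a field with more than two elements and let d ≥ 2. A bijection g : F^d → F^d respects the collinearity relation Col (i.e., Col(p,q,r) ↔ Col(g(p),g(q),g(r)) for all p,q,r) if and only if g = A ∘ α̃ for some affine transformation A of F^d and some field automorphism α of F, where α̃ denotes the map acting as α on each coordinate. -/
open FirstOrder

/-- Function symbols of the language of fields `{+, ·, 0, 1}`. -/
inductive FieldFunc : ℕ → Type
  | add : FieldFunc 2
  | mul : FieldFunc 2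
  | zero : FieldFunc 0
  | one : FieldFunc 0

/-- Relation symbols of the language of ordered fields: the ordering `≤`. -/
inductive OrderRel : ℕ → Type
  | le : OrderRel 2

/-- The first-order language of fields `{+, ·, 0, 1}`. -/
def fieldLang : FirstOrder.Language := ⟨FieldFunc, fun _ => Empty⟩

/-- The first-order language of ordered fields `{+, ·, 0, 1, ≤}`. -/
def orderedFieldLang : FirstOrder.Language := ⟨FieldFunc, OrderRel⟩

/-- The interpretation of the field function symbols in a field `F`. -/
def fieldFuncMap {F : Type} [Field F] : ∀ {n}, FieldFunc n → (Fin n → F) → F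
  | _, .add, x => x 0 + x 1
  | _, .mul, x => x 0 * x 1
  | _, .zero, _ => 0
  | _, .one, _ => 1

/-- A field `F` as a structure for the language of fields. -/
def fieldStr (F : Type) [Field F] : fieldLang.Structure F where
  funMap := fieldFuncMap
  RelMap := fun r => r.elim

/-- A linearly ordered field `F` as a structure for the language of ordered fields. -/
def orderedFieldStr (F : Type) [Field F] [LinearOrder F] [IsStrictOrderedRing F] : orderedFieldLang.Structure F where
  funMap := fieldFuncMap
  RelMap := fun r x => match r with | .le => x 0 ≤ x 1

/-- An `n`-ary relation `R` on `F^d` is definable over the field `F` iff its flattening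
(a `d·n`-ary relation on `F`, here indexed by `Fin n × Fin d`) is definable without parameters
by a first-order formula in the language of fields interpreted in `F`. -/
def DefinableOverField (F : Type) [Field F] (d : ℕ) {n : ℕ}
    (R : (Fin n → Fin d → F) → Prop) : Prop :=
  letI := fieldStr F
  ∃ φ : fieldLang.Formula (Fin n × Fin d),
    ∀ p : Fin n → Fin d → F, R p ↔ φ.Realize fun q => p q.1 q.2

/-- An `n`-ary relation `R` on `F^d` is definable over the ordered field `F` iff its flattening
is definable without parameters by a first-order formula in the language of ordered fields
interpreted in `F`. -/
def DefinableOverOrderedField (F : Type) [Field F] [LinearOrder F] [IsStrictOrderedRing F] (d : ℕ) {n : ℕ}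
    (R : (Fin n → Fin d → F) → Prop) : Prop :=
  letI := orderedFieldStr F
  ∃ φ : orderedFieldLang.Formula (Fin n × Fin d),
    ∀ p : Fin n → Fin d → F, R p ↔ φ.Realize fun q => p q.1 q.2

/-- A first-order structure in a purely relational language with universe `P`,
given by an indexed family of relations with their arities. -/
structure RelStruct (P : Type) where
  ι : Type
  arity : ι → ℕ
  rel : ∀ i, (Fin (arity i) → P) → Prop

namespace RelStruct

variable {P : Type}

/-- The purely relational first-order language of `G`. -/
def lang (G : RelStruct P) : FirstOrder.Language :=
  ⟨fun _ => Empty, fun n => { i : G.ι // G.arity i = n }⟩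

/-- `P` as a first-order structure for the language of `G`. -/
def str (G : RelStruct P) : G.lang.Structure P where
  funMap := fun f => f.elim
  RelMap := fun r x => G.rel r.1 fun j => x (Fin.cast r.2 j)

/-- A relation is a *concept* of `G` iff it is definable in `G` without parameters. -/
def Concept (G : RelStruct P) {n : ℕ} (R : (Fin n → P) → Prop) : Prop :=
  letI := G.str
  ∃ φ : G.lang.Formula (Fin n), ∀ a : Fin n → P, R a ↔ φ.Realize a

/-- An automorphism of `G` is a bijection of its universe respecting all its relations. -/
def IsAut (G : RelStruct P) (g : P → P) : Prop :=
  Function.Bijective g ∧ ∀ i (a : Fin (G.arity i) → P), G.rel i a ↔ G.rel i (g ∘ a)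

/-- The set of all concepts (of all arities `n ≥ 1`) of `G`. -/
def conceptSet (G : RelStruct P) : Set (Σ n : ℕ, (Fin n → P) → Prop) :=
  { R | 1 ≤ R.1 ∧ G.Concept R.2 }

/-- The set of automorphisms of `G`. -/
def autSet (G : RelStruct P) : Set (P → P) := { g | G.IsAut g }

end RelStruct

/-- An affine transformation of `F^d`: a composition of a linear bijection with a translation. -/
def IsAffineTrf (F : Type) [Field F] (d : ℕ) (A : (Fin d → F) → (Fin d → F)) : Prop :=
  ∃ (L : (Fin d → F) ≃ₗ[F] (Fin d → F)) (t : Fin d → F), ∀ p, A p = L p + t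

/-- The set of affine automorphisms of `G`: affine transformations that are automorphisms. -/
def affAutSet (F : Type) [Field F] (d : ℕ) (G : RelStruct (Fin d → F)) :
    Set ((Fin d → F) → (Fin d → F)) :=
  { g | IsAffineTrf F d g ∧ G.IsAut g }

/-- The collinearity relation on `F^d`. -/
def Col {F : Type} [Field F] {d : ℕ} (p q r : Fin d → F) : Prop :=
  r = p ∨ ∃ l : F, q = p + l • (r - p)

/-- Collinearity as a ternary relation in the sense of `RelStruct` concepts. -/
def colRel (F : Type) [Field F] (d : ℕ) : (Fin 3 → Fin d → F) → Prop :=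
  fun a => Col (a 0) (a 1) (a 2)

/-- The betweenness relation on `F^d` over a linearly ordered field. -/
def Bw {F : Type} [Field F] [LinearOrder F] [IsStrictOrderedRing F] {d : ℕ} (p q r : Fin d → F) : Prop :=
  ∃ l : F, 0 ≤ l ∧ l ≤ 1 ∧ q = p + l • (r - p)

/-- Betweenness as a ternary relation in the sense of `RelStruct` concepts. -/
def bwRel (F : Type) [Field F] [LinearOrder F] [IsStrictOrderedRing F] (d : ℕ) : (Fin 3 → Fin d → F) → Prop :=
  fun a => Bw (a 0) (a 1) (a 2)

/-- `R` is closed under a map `g` iff `R(a₁,…,aₙ)` implies `R(g(a₁),…,g(aₙ))`. -/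
def ClosedUnder {P : Type} {n : ℕ} (R : (Fin n → P) → Prop) (g : P → P) : Prop :=
  ∀ a, R a → R (g ∘ a)

/-- The map on `F^d` induced componentwise by a field automorphism `α` of `F`. -/
def indMap {F : Type} [Field F] (α : F ≃+* F) {d : ℕ} : (Fin d → F) → (Fin d → F) :=
  fun p j => α (p j)

/-!
After subtracting `g 0` we may assume `g 0 = 0`. Such a collineation maps each line through `0`
onto a line through `0`, hence preserves linear independence of pairs. Since `F` has an element
`μ ≠ 0, 1`, every point of the plane spanned by independent `u, v` lies on a line joining a
point of `F • u` to a point of `F • v`, so `g` maps that plane into the plane spanned by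
`g u, g v`. Parallel lines are disjoint coplanar lines, which pins down `g (u + v) = g u + g v`;
with `d ≥ 2` an auxiliary independent vector extends additivity to dependent pairs. Additivity
forces the factor by which `g` scales a line through `0` to be the same for all lines, which
gives a field automorphism `α` with `g (c • x) = α c • g x`, so that `g ∘ α̃⁻¹` is linear.
-/

open Function

attribute [local instance] RingHomInvPair.of_ringEquiv RingHomInvPair.of_ringEquiv_symm

variable {F : Type} [Field F] {d : ℕ}

lemma exists_ne_zero_ne_one_of_two_lt_mk (hF : 2 < Cardinal.mk F) : ∃ μ : F, μ ≠ 0 ∧ μ ≠ 1 := by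
  by_contra! h
  have huniv : (Set.univ : Set F) ⊆ {0, 1} := fun μ _ => by
    by_cases hμ : μ = 0
    · exact Or.inl hμ
    · exact Or.inr (h μ hμ)
  refine hF.not_ge ?_
  calc Cardinal.mk F = Cardinal.mk (Set.univ : Set F) := Cardinal.mk_univ.symm
    _ ≤ Cardinal.mk ({0, 1} : Set F) := Cardinal.mk_le_mk_of_subset huniv
    _ ≤ 2 := Cardinal.mk_insert_le.trans (by simp [one_add_one_eq_two])

lemma col_zero_left_iff {u v : Fin d → F} : Col 0 v u ↔ u = 0 ∨ ∃ l : F, v = l • u := by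
  simp [Col]

lemma linearIndependent_pair_iff_not_col {u v : Fin d → F} :
    LinearIndependent F ![u, v] ↔ ¬ Col 0 v u := by
  rcases eq_or_ne u 0 with rfl | hu
  · simpa [Col] using fun h => h.ne_zero 0 rfl
  · simp [LinearIndependent.pair_iff' hu, col_zero_left_iff, hu, eq_comm]

lemma col_add_const_iff (t p q r : Fin d → F) : Col (p + t) (q + t) (r + t) ↔ Col p q r := by
  simp only [Col, add_left_inj, add_sub_add_right_eq_sub]
  exact or_congr Iff.rfl (exists_congr fun l => by rw [add_right_comm p t, add_left_inj])

lemma Col.map {σ : F →+* F} (f : (Fin d → F) →ₛₗ[σ] (Fin d → F)) {p q r : Fin d → F}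
    (h : Col p q r) : Col (f p) (f q) (f r) := by
  rcases h with rfl | ⟨l, rfl⟩
  · exact Or.inl rfl
  · exact Or.inr ⟨σ l, by simp⟩

lemma col_map_iff {σ σ' : F →+* F} [RingHomInvPair σ σ'] [RingHomInvPair σ' σ]
    (e : (Fin d → F) ≃ₛₗ[σ] (Fin d → F)) (p q r : Fin d → F) :
    Col (e p) (e q) (e r) ↔ Col p q r :=
  ⟨fun h => by simpa using h.map e.symm.toLinearMap, fun h => h.map e.toLinearMap⟩

def indMapEquiv (α : F ≃+* F) : (Fin d → F) ≃ₛₗ[(α : F →+* F)] (Fin d → F) where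
  toFun := indMap α
  invFun := indMap α.symm
  map_add' _ _ := funext fun _ => map_add α _ _
  map_smul' _ _ := funext fun _ => map_mul α _ _
  left_inv _ := funext fun _ => α.symm_apply_apply _
  right_inv _ := funext fun _ => α.apply_symm_apply _

@[simp]
lemma coe_indMapEquiv (α : F ≃+* F) : ⇑(indMapEquiv (d := d) α) = indMap α :=
  rfl

lemma exists_linearEquiv_eq_comp_indMap {α : F ≃+* F} {h : (Fin d → F) → (Fin d → F)}
    (hbij : Bijective h) (hadd : ∀ x y, h (x + y) = h x + h y)
    (hsmul : ∀ (c : F) x, h (c • x) = α c • h x) :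
    ∃ L : (Fin d → F) ≃ₗ[F] (Fin d → F), ∀ p, h p = L (indMap α p) := by
  let f : (Fin d → F) →ₛₗ[(α : F →+* F)] (Fin d → F) := ⟨⟨h, hadd⟩, hsmul⟩
  refine ⟨(indMapEquiv α).symm.trans (LinearEquiv.ofBijective f hbij), fun p => ?_⟩
  change h p = f ((indMapEquiv α).symm (indMapEquiv α p))
  rw [LinearEquiv.symm_apply_apply]
  rfl

lemma exists_linearIndependent_pair (hd : 2 ≤ d) {u : Fin d → F} (hu : u ≠ 0) :
    ∃ w, LinearIndependent F ![u, w] :=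
  exists_linearIndependent_pair_of_one_lt_finrank (by rw [Module.finrank_fin_fun]; omega) hu

lemma linearIndependent_pair_smul_left {u w : Fin d → F} (huw : LinearIndependent F ![u, w])
    {c : F} (hc : c ≠ 0) : LinearIndependent F ![c • u, w] := by
  simpa using (LinearIndependent.pair_smul_smul_iff (IsUnit.mk0 c hc) isUnit_one).2 huw

structure IsCollineation (h : (Fin d → F) → (Fin d → F)) : Prop where
  bijective : Bijective h
  col_iff : ∀ p q r, Col p q r ↔ Col (h p) (h q) (h r)

namespace IsCollineation

variable {h : (Fin d → F) → (Fin d → F)}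

lemma add_const (H : IsCollineation h) (t : Fin d → F) : IsCollineation (fun p => h p + t) :=
  ⟨(Equiv.addRight t).bijective.comp H.bijective,
    fun p q r => (H.col_iff p q r).trans (col_add_const_iff t _ _ _).symm⟩

lemma map_ne_zero (H : IsCollineation h) (h0 : h 0 = 0) {u : Fin d → F} (hu : u ≠ 0) :
    h u ≠ 0 :=
  fun hu' => hu (H.bijective.injective (hu'.trans h0.symm))

lemma exists_map_smul (H : IsCollineation h) (h0 : h 0 = 0) {u : Fin d → F} (hu : u ≠ 0)
    (s : F) : ∃ t : F, h (s • u) = t • h u := by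
  have hcol := (H.col_iff 0 (s • u) u).1 (col_zero_left_iff.2 (Or.inr ⟨s, rfl⟩))
  rw [h0, col_zero_left_iff] at hcol
  exact hcol.resolve_left (H.map_ne_zero h0 hu)

lemma exists_smul_eq_map (H : IsCollineation h) (h0 : h 0 = 0) {u : Fin d → F} (hu : u ≠ 0)
    (t : F) : ∃ s : F, h (s • u) = t • h u := by
  obtain ⟨q, hq⟩ := H.bijective.surjective (t • h u)
  have hcol : Col (h 0) (h q) (h u) := by
    rw [h0, hq, col_zero_left_iff]
    exact Or.inr ⟨t, rfl⟩
  rw [← H.col_iff, col_zero_left_iff] at hcol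
  obtain ⟨s, rfl⟩ := hcol.resolve_left hu
  exact ⟨s, hq⟩

lemma linearIndependent_pair (H : IsCollineation h) (h0 : h 0 = 0) {u v : Fin d → F}
    (huv : LinearIndependent F ![u, v]) : LinearIndependent F ![h u, h v] := by
  rw [linearIndependent_pair_iff_not_col] at huv ⊢
  rwa [← h0, ← H.col_iff]

/-- For `μ ≠ 0, 1`, the point `s • u + t • v` lies on the line through `((1 - μ)⁻¹ * s) • u`
and `(μ⁻¹ * t) • v`. -/
lemma exists_map_smul_add_smul (H : IsCollineation h) (h0 : h 0 = 0)
    (hF : 2 < Cardinal.mk F) {u v : Fin d → F} (huv : LinearIndependent F ![u, v]) (s t : F) :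
    ∃ a b : F, h (s • u + t • v) = a • h u + b • h v := by
  obtain ⟨μ, hμ0, hμ1⟩ := exists_ne_zero_ne_one_of_two_lt_mk hF
  have hμ1' : 1 - μ ≠ 0 := sub_ne_zero.2 hμ1.symm
  set x := ((1 - μ)⁻¹ * s) • u
  set y := (μ⁻¹ * t) • v
  have hxy : s • u + t • v = x + μ • (y - x) := by
    calc s • u + t • v = ((1 - μ) * ((1 - μ)⁻¹ * s)) • u + (μ * (μ⁻¹ * t)) • v := by
          rw [mul_inv_cancel_left₀ hμ1', mul_inv_cancel_left₀ hμ0]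
      _ = x + μ • (y - x) := by module
  obtain ⟨a, ha⟩ : ∃ a : F, h x = a • h u :=
    H.exists_map_smul h0 (by simpa using huv.ne_zero 0) _
  obtain ⟨b, hb⟩ : ∃ b : F, h y = b • h v :=
    H.exists_map_smul h0 (by simpa using huv.ne_zero 1) _
  by_cases hyx : y = x
  · exact ⟨a, 0, by rw [hxy, hyx, sub_self, smul_zero, add_zero, ha, zero_smul, add_zero]⟩
  · have hcol := (H.col_iff x (s • u + t • v) y).1 (Or.inr ⟨μ, hxy⟩)
    obtain ⟨l, hl⟩ := hcol.resolve_left (fun he => hyx (H.bijective.injective he))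
    exact ⟨(1 - l) * a, l * b, by rw [hl, ha, hb]; module⟩

/-- Otherwise the line through `h v` and `h (u + v)` would meet the line `F • h u`, while the
line through `v` and `u + v` is parallel to `F • u`. -/
lemma coeff_eq_one_of_map_add (H : IsCollineation h) (h0 : h 0 = 0) {u v : Fin d → F}
    (huv : LinearIndependent F ![u, v]) {a b : F} (hab : h (u + v) = a • h u + b • h v) :
    b = 1 := by
  by_contra hb
  have hb' : 1 - b ≠ 0 := sub_ne_zero.2 (Ne.symm hb)
  have hu : u ≠ 0 := by simpa using huv.ne_zero 0
  obtain ⟨s, hs⟩ := H.exists_smul_eq_map h0 hu ((1 - b)⁻¹ * a)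
  have hcol : Col (h v) (h (s • u)) (h (u + v)) := by
    refine Or.inr ⟨(1 - b)⁻¹, ?_⟩
    rw [hs, hab]
    calc ((1 - b)⁻¹ * a) • h u
        = h v + (1 - b)⁻¹ • (a • h u + b • h v - h v) + ((1 - b)⁻¹ * (1 - b) - 1) • h v := by
          module
      _ = h v + (1 - b)⁻¹ • (a • h u + b • h v - h v) := by
          rw [inv_mul_cancel₀ hb', sub_self, zero_smul, add_zero]
  rw [← H.col_iff] at hcol
  rcases hcol with huv' | ⟨l, hl⟩
  · exact hu (by simpa using huv')
  · exact (LinearIndependent.pair_iff' hu).1 huv (s - l) (by rw [sub_smul, hl]; module)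

lemma map_add_of_linearIndependent (H : IsCollineation h) (h0 : h 0 = 0)
    (hF : 2 < Cardinal.mk F) {u v : Fin d → F} (huv : LinearIndependent F ![u, v]) :
    h (u + v) = h u + h v := by
  obtain ⟨a, b, hab⟩ := H.exists_map_smul_add_smul h0 hF huv 1 1
  rw [one_smul, one_smul] at hab
  have hb : b = 1 := H.coeff_eq_one_of_map_add h0 huv hab
  have ha : a = 1 := H.coeff_eq_one_of_map_add h0 (LinearIndependent.pair_symm_iff.1 huv)
    (by rw [add_comm, hab, add_comm])
  rw [hab, ha, hb, one_smul, one_smul]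

lemma map_add (H : IsCollineation h) (h0 : h 0 = 0) (hF : 2 < Cardinal.mk F) (hd : 2 ≤ d)
    (x y : Fin d → F) : h (x + y) = h x + h y := by
  have hadd {u v : Fin d → F} (huv : LinearIndependent F ![u, v]) : h (u + v) = h u + h v :=
    H.map_add_of_linearIndependent h0 hF huv
  rcases eq_or_ne x 0 with rfl | hx
  · rw [zero_add, h0, zero_add]
  by_cases hxy : LinearIndependent F ![x, y]
  · exact hadd hxy
  obtain ⟨c, rfl⟩ : ∃ c : F, c • x = y := by simpa [LinearIndependent.pair_iff' hx] using hxy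
  rcases eq_or_ne c 0 with rfl | hc
  · rw [zero_smul, add_zero, h0, add_zero]
  obtain ⟨w, hw⟩ := exists_linearIndependent_pair hd hx
  have e1 : h (x + (c • x + w)) = h x + (h (c • x) + h w) := by
    rw [hadd (by simpa using hw), hadd (linearIndependent_pair_smul_left hw hc)]
  have hx1 : x + c • x = (1 + c) • x := by module
  rcases eq_or_ne (1 + c) 0 with hc1 | hc1
  · have hsum : x + c • x = 0 := by rw [hx1, hc1, zero_smul]
    rw [← add_assoc, hsum, zero_add] at e1
    rw [hsum, h0]
    linear_combination e1
  · have e2 : h ((x + c • x) + w) = h (x + c • x) + h w := by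
      rw [hx1]
      exact hadd (linearIndependent_pair_smul_left hw hc1)
    rw [add_assoc, e1] at e2
    linear_combination e2.symm

lemma smul_coeff_eq_of_linearIndependent (H : IsCollineation h) (h0 : h 0 = 0)
    (hF : 2 < Cardinal.mk F) (hd : 2 ≤ d) {p q : Fin d → F} (hpq : LinearIndependent F ![p, q])
    {c s t : F} (hp : h (c • p) = s • h p) (hq : h (c • q) = t • h q) : s = t := by
  have hpq0 : p + q ≠ 0 := fun he =>
    one_ne_zero (LinearIndependent.pair_iff.1 hpq 1 1 (by rw [one_smul, one_smul, he])).1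
  obtain ⟨r, hr⟩ := H.exists_map_smul h0 hpq0 c
  have hsum : (s - r) • h p + (t - r) • h q = 0 := by
    have e : s • h p + t • h q = r • (h p + h q) := by
      rw [← hp, ← hq, ← H.map_add h0 hF hd, ← smul_add, hr, H.map_add h0 hF hd]
    linear_combination (norm := module) e
  obtain ⟨hs, ht⟩ := LinearIndependent.pair_iff.1 (H.linearIndependent_pair h0 hpq) _ _ hsum
  exact (sub_eq_zero.1 hs).trans (sub_eq_zero.1 ht).symm

/-- Two dependent vectors are compared through a third vector independent of both. -/
lemma smul_coeff_eq (H : IsCollineation h) (h0 : h 0 = 0) (hF : 2 < Cardinal.mk F)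
    (hd : 2 ≤ d) {u x : Fin d → F} (hu : u ≠ 0) (hx : x ≠ 0) {c s t : F}
    (hs : h (c • u) = s • h u) (ht : h (c • x) = t • h x) : s = t := by
  by_cases hux : LinearIndependent F ![u, x]
  · exact H.smul_coeff_eq_of_linearIndependent h0 hF hd hux hs ht
  obtain ⟨e, rfl⟩ : ∃ e : F, e • u = x := by simpa [LinearIndependent.pair_iff' hu] using hux
  have he : e ≠ 0 := by rintro rfl; exact hx (zero_smul F u)
  obtain ⟨w, hw⟩ := exists_linearIndependent_pair hd hu
  obtain ⟨r, hr⟩ := H.exists_map_smul h0 (by simpa using hw.ne_zero 1) c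
  exact (H.smul_coeff_eq_of_linearIndependent h0 hF hd hw hs hr).trans
    (H.smul_coeff_eq_of_linearIndependent h0 hF hd (linearIndependent_pair_smul_left hw he) ht
      hr).symm

lemma exists_ringEquiv_map_smul (H : IsCollineation h) (h0 : h 0 = 0) (hF : 2 < Cardinal.mk F)
    (hd : 2 ≤ d) : ∃ α : F ≃+* F, ∀ (c : F) x, h (c • x) = α c • h x := by
  obtain ⟨u, hu⟩ : ∃ u : Fin d → F, u ≠ 0 := ⟨Pi.single ⟨0, by omega⟩ 1, by simp⟩
  choose α hα using H.exists_map_smul h0 hu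
  have hsmul (c : F) (x : Fin d → F) : h (c • x) = α c • h x := by
    rcases eq_or_ne x 0 with rfl | hx
    · rw [smul_zero, h0, smul_zero]
    obtain ⟨t, ht⟩ := H.exists_map_smul h0 hx c
    rw [ht, H.smul_coeff_eq h0 hF hd hu hx (hα c) ht]
  have cancel : Injective (fun a : F => a • h u) := smul_left_injective F (H.map_ne_zero h0 hu)
  let σ : F →+* F :=
    { toFun := α
      map_one' := cancel (by dsimp only; rw [← hα, one_smul, one_smul])
      map_mul' a b := cancel (by dsimp only; rw [← hα, mul_smul, mul_smul, hsmul, hα])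
      map_zero' := cancel (by dsimp only; rw [← hα, zero_smul, zero_smul, h0])
      map_add' a b := cancel (by
        dsimp only; rw [← hα, add_smul, add_smul, H.map_add h0 hF hd, hα, hα]) }
  have hinj : Injective σ := fun a b hab => smul_left_injective F hu
    (H.bijective.injective (by rw [hα, hα]; exact congrArg (· • h u) hab))
  have hsurj : Surjective σ := fun t => by
    obtain ⟨s, hs⟩ := H.exists_smul_eq_map h0 hu t
    exact ⟨s, cancel ((hα s).symm.trans hs)⟩
  exact ⟨RingEquiv.ofBijective σ ⟨hinj, hsurj⟩, hsmul⟩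

end IsCollineation

/-- **Fundamental Theorem of Affine Geometry (field case).** Over a field `F` with more than two
elements and `d ≥ 2`, a bijection `g` of `F^d` respects collinearity iff `g = A ∘ α̃` for some
affine transformation `A` of `F^d` and some field automorphism `α` of `F`. -/
theorem fundamental_theorem_affine_geometry_field
    (F : Type) [Field F] (hF : 2 < Cardinal.mk F) (d : ℕ) (hd : 2 ≤ d)
    (g : (Fin d → F) → (Fin d → F)) (hg : Function.Bijective g) :
    (∀ p q r : Fin d → F, Col p q r ↔ Col (g p) (g q) (g r)) ↔
      ∃ (A : (Fin d → F) → (Fin d → F)) (α : F ≃+* F),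
        IsAffineTrf F d A ∧ g = A ∘ indMap α := by
  constructor
  · intro hgC
    have H : IsCollineation (fun p => g p + -g 0) := (IsCollineation.mk hg hgC).add_const (-g 0)
    have h0 : g 0 + -g 0 = 0 := add_neg_cancel _
    obtain ⟨α, hsmul⟩ := H.exists_ringEquiv_map_smul h0 hF hd
    obtain ⟨L, hL⟩ := exists_linearEquiv_eq_comp_indMap H.bijective (H.map_add h0 hF hd) hsmul
    refine ⟨fun p => L p + g 0, α, ⟨L, g 0, fun _ => rfl⟩, funext fun p => ?_⟩
    simp [← hL]
  · rintro ⟨A, α, ⟨L, t, hA⟩, rfl⟩ p q r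
    simp only [Function.comp_apply, hA, col_add_const_iff, ← coe_indMapEquiv, col_map_iff]
end

section
/- Let L be a first-order language, let M be a finite L-structure, and let R be an n-ary relation on the universe of M. Then R is definable in M without parameters if and only if R is closed under every automorphism of M (equivalently, every automorphism of M respects R). -/
/-!
When `M` is finite, a tuple `b` satisfying every formula true of `a` is the image of `a` under an
automorphism: the existential closure of a finite part of the diagram of `M` holds of `a`, hence of
`b`, and yields a permutation sending `a` to `b` that respects any prescribed finitely many
symbols; as there are only finitely many permutations, finitely many symbols already force it to be
an automorphism. The class of such `b` is cut out by a finite conjunction of separating formulas,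
and an automorphism-invariant `R` is the finite disjunction of the classes of its elements.
-/

open FirstOrder

universe u v w

open FirstOrder.Language FirstOrder.Language.Structure

theorem Finset.exists_forall_mem_imp_forall {ι α : Type*} [Finite ι] (P : ι → α → Prop) :
    ∃ S : Finset α, ∀ i, (∀ a ∈ S, P i a) → ∀ a, P i a := by
  classical
  have := Fintype.ofFinite ι
  have hwitness : ∀ i, ∃ T : Finset α, (∀ a ∈ T, P i a) → ∀ a, P i a := fun i => by
    by_cases hi : ∀ a, P i a
    · exact ⟨∅, fun _ => hi⟩
    · obtain ⟨a, ha⟩ := not_forall.1 hi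
      exact ⟨{a}, fun h => absurd (h a (Finset.mem_singleton_self a)) ha⟩
  choose T hT using hwitness
  exact ⟨Finset.univ.biUnion T, fun i hS => hT i fun a ha =>
    hS a (Finset.mem_biUnion.2 ⟨i, Finset.mem_univ i, ha⟩)⟩

namespace FirstOrder.Language

variable {L : Language.{u, v}} {M : Type w} {N : Type*} [L.Structure N]

noncomputable def injectiveFormula [Finite M] : L.Formula M :=
  Formula.iInf fun p : {p : M × M // p.1 ≠ p.2} => ∼((Term.var p.1.1).equal (Term.var p.1.2))

theorem realize_injectiveFormula [Finite M] {i : M → N} :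
    (injectiveFormula : L.Formula M).Realize i ↔ Function.Injective i := by
  simp only [injectiveFormula, Formula.realize_iInf, Formula.realize_not, Formula.realize_equal,
    Term.realize_var, Subtype.forall, Prod.forall]
  exact ⟨fun h x y hxy => by_contra fun hne => h x y hne hxy, fun h x y hne => mt (@h x y) hne⟩

variable [L.Structure M]

def PreservesSymbol (i : M → N) : L.Symbols → Prop
  | Sum.inl ⟨_, f⟩ => ∀ x, i (funMap f x) = funMap f (i ∘ x)
  | Sum.inr ⟨_, r⟩ => ∀ x, RelMap r (i ∘ x) ↔ RelMap r x

open Classical in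
/-- The part of the atomic diagram of `M` that involves the symbol `s`. -/
noncomputable def symbolDiagram [Finite M] : L.Symbols → L.Formula M
  | Sum.inl ⟨_, f⟩ => Formula.iInf fun x =>
      (Term.var (funMap f x)).equal (Term.func f fun k => Term.var (x k))
  | Sum.inr ⟨_, r⟩ => Formula.iInf fun x =>
      if RelMap r x then r.formula (fun k => Term.var (x k))
      else ∼(r.formula fun k => Term.var (x k))

theorem realize_symbolDiagram [Finite M] {i : M → N} (s : L.Symbols) :
    (symbolDiagram s : L.Formula M).Realize i ↔ PreservesSymbol i s := by
  rcases s with ⟨_, f⟩ | ⟨_, r⟩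
  · simp [symbolDiagram, PreservesSymbol, Function.comp_def]
  · simp only [symbolDiagram, PreservesSymbol, Formula.realize_iInf]
    refine forall_congr' fun x => ?_
    by_cases hx : RelMap r x <;> simp [hx, Function.comp_def]

def Equiv.ofPreservesSymbol (e : M ≃ N) (h : ∀ s : L.Symbols, PreservesSymbol e s) :
    M ≃[L] N where
  toEquiv := e
  map_fun' f := h (Sum.inl ⟨_, f⟩)
  map_rel' r := h (Sum.inr ⟨_, r⟩)

variable {α : Type*}

theorem exists_injective_preservesSymbol_of_forall_realize [Finite M] [Finite α] {a b : α → M}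
    (h : ∀ φ : L.Formula α, φ.Realize a → φ.Realize b) (S : Finset L.Symbols) :
    ∃ i : M → M, Function.Injective i ∧ i ∘ a = b ∧ ∀ s ∈ S, PreservesSymbol i s := by
  let diagram : L.Formula M := injectiveFormula ⊓ Formula.iInf fun s : S => symbolDiagram s.1
  let Φ : L.Formula α := (diagram.relabel Sum.inr ⊓
    Formula.iInf fun j => (Term.var (Sum.inl j)).equal (Term.var (Sum.inr (a j)))).iExs M
  have hΦ : ∀ c, Φ.Realize c ↔ ∃ i : M → M,
      (Function.Injective i ∧ ∀ s ∈ S, PreservesSymbol i s) ∧ ∀ j, c j = i (a j) := by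
    intro c
    simp [Φ, diagram, realize_injectiveFormula, realize_symbolDiagram, Function.comp_def]
  have hid : ∀ s : L.Symbols, PreservesSymbol (id : M → M) s := by
    rintro (⟨_, f⟩ | ⟨_, r⟩) <;> exact fun _ => by rfl
  have hΦa : Φ.Realize a :=
    (hΦ a).2 ⟨id, ⟨Function.injective_id, fun s _ => hid s⟩, fun _ => rfl⟩
  obtain ⟨i, ⟨hinj, hS⟩, hb⟩ := (hΦ b).1 (h Φ hΦa)
  exact ⟨i, hinj, funext fun j => (hb j).symm, hS⟩

theorem exists_equiv_comp_eq_of_forall_realize [Finite M] [Finite α] {a b : α → M}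
    (h : ∀ φ : L.Formula α, φ.Realize a → φ.Realize b) :
    ∃ g : M ≃[L] M, g ∘ a = b := by
  obtain ⟨S, hS⟩ :=
    Finset.exists_forall_mem_imp_forall fun (g : Equiv.Perm M) => PreservesSymbol (L := L) g
  obtain ⟨i, hinj, hab, hi⟩ := exists_injective_preservesSymbol_of_forall_realize h S
  let e := Equiv.ofBijective i (Finite.injective_iff_bijective.1 hinj)
  exact ⟨Equiv.ofPreservesSymbol e (hS e hi), hab⟩

theorem exists_formula_realize_iff_forall_realize_imp [Finite M] [Finite α] (a : α → M) :
    ∃ ψ : L.Formula α,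
      ∀ c : α → M, ψ.Realize c ↔ ∀ φ : L.Formula α, φ.Realize a → φ.Realize c := by
  have hsep : ∀ c : {c : α → M // ¬ ∀ φ : L.Formula α, φ.Realize a → φ.Realize c},
      ∃ φ : L.Formula α, φ.Realize a ∧ ¬ φ.Realize c.1 := fun c => by
    simpa only [not_forall, exists_prop] using c.2
  choose sep hsep using hsep
  refine ⟨Formula.iInf sep, fun c => ⟨fun hc => ?_, fun hc => hc _ ?_⟩⟩
  · by_contra hnc
    exact (hsep ⟨c, hnc⟩).2 (Formula.realize_iInf.1 hc _)
  · exact Formula.realize_iInf.2 fun c => (hsep c).1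

end FirstOrder.Language

/-- **Corollary.** In a finite `L`-structure `M`, an `n`-ary relation `R` on `M` is definable
without parameters iff `R` is closed under every automorphism of `M`. -/
theorem finite_definable_iff_closed_under_aut
    (L : FirstOrder.Language.{u, v}) (M : Type w) [L.Structure M] [Finite M] (n : ℕ)
    (R : (Fin n → M) → Prop) :
    (∃ φ : L.Formula (Fin n), ∀ a : Fin n → M, R a ↔ φ.Realize a) ↔
      ∀ g : M ≃[L] M, ∀ a : Fin n → M, R a → R fun j => g (a j) := by
  constructor
  · rintro ⟨φ, hφ⟩ g a ha
    exact (hφ _).2 ((StrongHomClass.realize_formula g φ).2 ((hφ a).1 ha))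
  · intro hR
    choose ψ hψ using
      fun a : Fin n → M => exists_formula_realize_iff_forall_realize_imp (L := L) a
    refine ⟨Formula.iSup fun a : {a // R a} => ψ a, fun c => ?_⟩
    simp only [Formula.realize_iSup, hψ, Subtype.exists, exists_prop]
    refine ⟨fun hc => ⟨c, hc, fun _ => id⟩, ?_⟩
    rintro ⟨a, ha, hac⟩
    obtain ⟨g, rfl⟩ := exists_equiv_comp_eq_of_forall_realize hac
    exact hR g a ha
end
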